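/- Let R be a semisimple artinian ring and v = (a₁,…,aₙ)ᵗ a column vector over R with n ≥ 2. Write Σᵢ Raᵢ = Re with e an idempotent. Then there exists an elementary matrix ε ∈ Eₙ(R) such that ε·v = (0,…,0,e)ᵗ. -/

import Mathlib

/-!
A semisimple ring `R` is unit-regular: right multiplication by `x` maps a complement `K` of its
kernel isomorphically onto `Rx`; since finite-length semisimple modules cancel from direct sums,
this isomorphism extends to an automorphism of `R`, i.e. to right multiplication by a unit `u`,
and then `x u⁻¹ x = x`. Unit-regularity gives stable range one: for all `a, b` some `b + t a`
generates `Ra + Rb`. With it, transvections fold every entry of `v` into the last one, leaving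
`(0, …, 0, g)` with `Rg = Re`, and three transvections through another coordinate turn `g`
into `e`.
-/

open Submodule LinearMap

namespace Submodule

variable {R M : Type*} [Ring R] [AddCommGroup M] [Module R M]

theorem span_singleton_sub_smul_sup (x y : M) (c : R) :
    span R {x - c • y} ⊔ span R {y} = span R {x} ⊔ span R {y} := by
  have hy := mem_span_singleton_self (R := R) y
  refine le_antisymm (sup_le ?_ le_sup_right) (sup_le ?_ le_sup_right) <;>
    rw [span_singleton_le_iff_mem]
  · exact sub_mem (mem_sup_left (mem_span_singleton_self x)) (mem_sup_right (smul_mem _ c hy))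
  · simpa using add_mem (mem_sup_left (mem_span_singleton_self (x - c • y)))
      (mem_sup_right (smul_mem _ c hy))

noncomputable def prodEquivSupOfDisjoint {p q : Submodule R M} (h : Disjoint p q) :
    (p × q) ≃ₗ[R] ↥(p ⊔ q) :=
  (LinearEquiv.ofInjective (p.subtype.coprod q.subtype) <| by
      rw [← ker_eq_bot, ker_coprod_of_disjoint_range, ker_subtype, ker_subtype, prod_bot]
      rwa [range_subtype, range_subtype]).trans
    (LinearEquiv.ofEq _ _ <| by rw [range_coprod, range_subtype, range_subtype])

theorem nonempty_linearEquiv_of_isCompl_of_isCompl {p q q' : Submodule R M} (h : IsCompl p q)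
    (h' : IsCompl p q') : Nonempty (q ≃ₗ[R] q') :=
  ⟨(quotientEquivOfIsCompl p q h).symm.trans (quotientEquivOfIsCompl p q' h')⟩

theorem nonempty_linearEquiv_of_isCompl_of_isSimpleModule [IsSemisimpleModule R M]
    {S T V V' : Submodule R M} [IsSimpleModule R S] [IsSimpleModule R T] (e : S ≃ₗ[R] T)
    (hV : IsCompl S V) (hV' : IsCompl T V') : Nonempty (V ≃ₗ[R] V') := by
  rcases eq_or_ne S T with rfl | hne
  · exact nonempty_linearEquiv_of_isCompl_of_isCompl hV hV'
  have hST : Disjoint S T :=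
    (isSimpleModule_iff_isAtom.mp ‹_›).disjoint_of_ne (isSimpleModule_iff_isAtom.mp ‹_›) hne
  -- a complement `W` of `S ⊕ T` gives `V ≃ T ⊕ W ≃ S ⊕ W ≃ V'`
  obtain ⟨W, hW⟩ := ComplementedLattice.exists_isCompl (S ⊔ T)
  obtain ⟨σ⟩ := nonempty_linearEquiv_of_isCompl_of_isCompl hV
    (hST.isCompl_sup_right_of_isCompl_sup_left hW)
  obtain ⟨σ'⟩ := nonempty_linearEquiv_of_isCompl_of_isCompl
    (hST.symm.isCompl_sup_right_of_isCompl_sup_left (by rwa [sup_comm])) hV'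
  exact ⟨σ.trans <| (prodEquivSupOfDisjoint (hW.disjoint.mono_left le_sup_right)).symm.trans <|
    (e.symm.prodCongr (LinearEquiv.refl R W)).trans <|
    (prodEquivSupOfDisjoint (hW.disjoint.mono_left le_sup_left)).trans σ'⟩

end Submodule

section Cancellation

variable {R : Type*} [Ring R]

instance IsSemisimpleModule.prod {M N : Type*} [AddCommGroup M] [Module R M] [AddCommGroup N]
    [Module R N] [IsSemisimpleModule R M] [IsSemisimpleModule R N] :
    IsSemisimpleModule R (M × N) :=
  isSemisimpleModule_of_isSemisimpleModule_submodule'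
    (p := fun b : Bool => b.rec (range (inr R M N)) (range (inl R M N)))
    (fun b => b.rec (.range _) (.range _))
    (by rw [iSup_bool_eq]; exact isCompl_range_inl_inr.sup_eq_top)

theorem IsSimpleModule.nonempty_linearEquiv_of_prod {S B B' : Type*} [AddCommGroup S]
    [Module R S] [AddCommGroup B] [Module R B] [AddCommGroup B'] [Module R B']
    [IsSimpleModule R S] [IsSemisimpleModule R B'] (ψ : (S × B) ≃ₗ[R] (S × B')) :
    Nonempty (B ≃ₗ[R] B') := by
  have hψ : IsCompl ((range (inl R S B)).map ψ.toLinearMap)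
      ((range (inr R S B)).map ψ.toLinearMap) :=
    ⟨isCompl_range_inl_inr.disjoint.map_orderIso (orderIsoMapComap ψ),
      isCompl_range_inl_inr.codisjoint.map_orderIso (orderIsoMapComap ψ)⟩
  let eS : S ≃ₗ[R] (range (inl R S B)).map ψ.toLinearMap :=
    (LinearEquiv.ofInjective _ inl_injective).trans (ψ.submoduleMap _)
  let eS' : S ≃ₗ[R] range (inl R S B') := LinearEquiv.ofInjective _ inl_injective
  have := IsSimpleModule.congr eS.symm
  have := IsSimpleModule.congr eS'.symm
  obtain ⟨σ⟩ := nonempty_linearEquiv_of_isCompl_of_isSimpleModule (eS.symm.trans eS') hψ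
    isCompl_range_inl_inr
  exact ⟨((LinearEquiv.ofInjective _ inr_injective).trans (ψ.submoduleMap _)).trans <|
    σ.trans (LinearEquiv.ofInjective _ inr_injective).symm⟩

theorem IsSemisimpleModule.nonempty_linearEquiv_of_prod {A B B' : Type*} [AddCommGroup A]
    [Module R A] [AddCommGroup B] [Module R B] [AddCommGroup B'] [Module R B']
    [IsSemisimpleModule R A] [IsArtinian R A] [IsSemisimpleModule R B']
    (ψ : (A × B) ≃ₗ[R] (A × B')) : Nonempty (B ≃ₗ[R] B') := by
  suffices key : ∀ U : Submodule R A, ∀ B : Type _, ∀ B' : Type _, ∀ [AddCommGroup B]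
      [Module R B] [AddCommGroup B'] [Module R B'] [IsSemisimpleModule R B'],
      ((U × B) ≃ₗ[R] (U × B')) → Nonempty (B ≃ₗ[R] B') from
    key ⊤ B B' <| ((topEquiv.prodCongr (LinearEquiv.refl R B)).trans ψ).trans
      (topEquiv.prodCongr (LinearEquiv.refl R B')).symm
  intro U
  induction U using WellFoundedLT.induction with | _ U ih =>
  intro B B' _ _ _ _ _ ψ
  obtain rfl | ⟨S, hSU, hS⟩ := IsSemisimpleModule.eq_bot_or_exists_simple_le U
  · exact ⟨LinearEquiv.uniqueProd.symm.trans (ψ.trans LinearEquiv.uniqueProd)⟩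
  obtain ⟨U₀, hdisj, hsup⟩ := IsModularLattice.exists_disjoint_and_sup_eq hSU
  have hlt : U₀ < U := (hsup ▸ le_sup_right : U₀ ≤ U).lt_of_ne <| by
    rintro rfl
    exact (isSimpleModule_iff_isAtom.mp hS).1 (disjoint_self.mp (hdisj.mono_right hSU))
  let eU : (S × U₀) ≃ₗ[R] U := (prodEquivSupOfDisjoint hdisj).trans (LinearEquiv.ofEq _ _ hsup)
  obtain ⟨σ⟩ := IsSimpleModule.nonempty_linearEquiv_of_prod <|
    (LinearEquiv.prodAssoc R S U₀ B).symm ≪≫ₗ eU.prodCongr (.refl R B) ≪≫ₗ ψ ≪≫ₗ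
      eU.symm.prodCongr (.refl R B') ≪≫ₗ LinearEquiv.prodAssoc R S U₀ B'
  exact ih U₀ hlt B B' σ

theorem IsSemisimpleModule.exists_linearEquiv_extend {M : Type*} [AddCommGroup M] [Module R M]
    [IsSemisimpleModule R M] [IsArtinian R M] {U U' : Submodule R M} (φ : U ≃ₗ[R] U') :
    ∃ Ψ : M ≃ₗ[R] M, ∀ x : U, Ψ x = φ x := by
  obtain ⟨V, hV⟩ := ComplementedLattice.exists_isCompl U
  obtain ⟨V', hV'⟩ := ComplementedLattice.exists_isCompl U'
  obtain ⟨σ⟩ := nonempty_linearEquiv_of_prod <| prodEquivOfIsCompl U V hV ≪≫ₗ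
    (prodEquivOfIsCompl U' V' hV').symm ≪≫ₗ φ.symm.prodCongr (.refl R V')
  refine ⟨(prodEquivOfIsCompl U V hV).symm ≪≫ₗ φ.prodCongr σ ≪≫ₗ prodEquivOfIsCompl U' V' hV',
    fun x => ?_⟩
  simp

end Cancellation

section UnitRegular

variable {R : Type*} [Ring R]

theorem IsSemisimpleRing.exists_mul_unit_mul_eq_self [IsSemisimpleRing R] (x : R) :
    ∃ u : Rˣ, x * u * x = x := by
  let ρ := toSpanSingleton R R x
  obtain ⟨K, hK⟩ := ComplementedLattice.exists_isCompl (ker ρ)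
  obtain ⟨Ψ, hΨ⟩ :=
    IsSemisimpleModule.exists_linearEquiv_extend (kerComplementEquivRange ρ hK.symm)
  have hΨK (k : K) : Ψ k = k * x := by simp [hΨ, ρ]
  have hΨ_mul (r : R) : Ψ r = r * Ψ 1 := by simpa using Ψ.map_smul r 1
  have hΨ_symm_mul (r : R) : Ψ.symm r = r * Ψ.symm 1 := by simpa using Ψ.symm.map_smul r 1
  let u : Rˣ := ⟨Ψ 1, Ψ.symm 1, by rw [← hΨ_symm_mul, Ψ.symm_apply_apply],
    by rw [← hΨ_mul, Ψ.apply_symm_apply]⟩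
  obtain ⟨n, k, hn, hk, hnk⟩ := codisjoint_iff_exists_add_eq.mp hK.codisjoint 1
  have hkx : k * x = x :=
    calc k * x = (n + k) * x := by rw [add_mul, show n * x = 0 from hn, zero_add]
      _ = x := by rw [hnk, one_mul]
  have hku : k * u = x :=
    calc k * u = Ψ k := (hΨ_mul k).symm
      _ = k * x := hΨK ⟨k, hk⟩
      _ = x := hkx
  refine ⟨u⁻¹, ?_⟩
  calc x * ↑u⁻¹ * x = k * x := by rw [← hku, Units.mul_inv_cancel_right]
    _ = x := hkx

theorem IsIdempotentElem.unit_mul_of_mul_unit_mul_eq_self {x : R} {u : Rˣ}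
    (h : x * u * x = x) : IsIdempotentElem (u * x) := by
  rw [IsIdempotentElem, mul_assoc, ← mul_assoc x, h]

theorem IsIdempotentElem.span_singleton_add_eq_sup {f e : R} (hf : IsIdempotentElem f)
    (hfe : f * e = 0) : span R {f + e} = span R {f} ⊔ span R {e} := by
  have he : e ∈ span R {f + e} :=
    mem_span_singleton.mpr ⟨1 - f, by rw [smul_eq_mul, sub_mul, one_mul, mul_add, hf.eq, hfe,
      add_zero, add_sub_cancel_left]⟩
  refine le_antisymm (span_singleton_le_iff_mem _ _ |>.mpr <|
    add_mem_sup (mem_span_singleton_self f) (mem_span_singleton_self e)) (sup_le ?_ ?_) <;>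
    rw [span_singleton_le_iff_mem]
  · simpa using sub_mem (mem_span_singleton_self (f + e)) he
  · exact he

theorem IsSemisimpleRing.exists_span_singleton_add_mul_eq_sup [IsSemisimpleRing R] (a b : R) :
    ∃ t : R, span R {b + t * a} = span R {a} ⊔ span R {b} := by
  obtain ⟨u, hu⟩ := exists_mul_unit_mul_eq_self a
  obtain ⟨v, hv⟩ := exists_mul_unit_mul_eq_self (b - b * u * a)
  have he := IsIdempotentElem.unit_mul_of_mul_unit_mul_eq_self hu
  have hρ := IsIdempotentElem.unit_mul_of_mul_unit_mul_eq_self hv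
  have hρe : v * (b - b * u * a) * (u * a) = 0 := by
    rw [mul_assoc, sub_mul, mul_assoc b, mul_assoc b, he.eq, sub_self, mul_zero]
  -- `t` is chosen so that `v (b + t a)` is the sum of the idempotents `v (b - b u a)` and `u a`
  refine ⟨(↑v⁻¹ - b) * u, ?_⟩
  calc span R {b + (↑v⁻¹ - b) * u * a}
      = span R {v • (b + (↑v⁻¹ - b) * u * a)} := (span_singleton_group_smul_eq R v _).symm
    _ = span R {v * (b - b * u * a) + u * a} := by
      congr 2
      simp only [Units.smul_def, smul_eq_mul, mul_add, mul_sub, sub_mul, ← mul_assoc,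
        Units.mul_inv, one_mul]
      abel
    _ = span R {v • (b - b * u * a)} ⊔ span R {u • a} := hρ.span_singleton_add_eq_sup hρe
    _ = span R {a} ⊔ span R {b} := by
      rw [span_singleton_group_smul_eq, span_singleton_group_smul_eq, ← smul_eq_mul (b * u) a,
        span_singleton_sub_smul_sup, sup_comm]

end UnitRegular

namespace Matrix

open Function

def elementarySubmonoid (ι R : Type*) [Fintype ι] [DecidableEq ι] [Ring R] :
    Submonoid (Matrix ι ι R) :=
  Submonoid.closure {M | ∃ (i j : ι) (a : R), i ≠ j ∧ M = 1 + single i j a}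

variable {R ι : Type*} [Ring R] [Fintype ι] [DecidableEq ι]

def ElementaryReachable (x y : ι → R) : Prop :=
  ∃ ε ∈ elementarySubmonoid ι R, ε *ᵥ x = y

namespace ElementaryReachable

theorem refl (x : ι → R) : ElementaryReachable x x :=
  ⟨1, one_mem _, one_mulVec x⟩

theorem trans {x y z : ι → R} (hxy : ElementaryReachable x y) (hyz : ElementaryReachable y z) :
    ElementaryReachable x z := by
  obtain ⟨ε, hε, rfl⟩ := hxy
  obtain ⟨δ, hδ, rfl⟩ := hyz
  exact ⟨δ * ε, mul_mem hδ hε, (mulVec_mulVec _ _ _).symm⟩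

theorem update_add_mul (x : ι → R) {i j : ι} (hij : i ≠ j) (c : R) :
    ElementaryReachable x (update x i (x i + c * x j)) := by
  refine ⟨1 + single i j c, Submonoid.subset_closure ⟨i, j, c, hij, rfl⟩, ?_⟩
  ext k
  rcases eq_or_ne k i with rfl | hk <;> simp [add_mulVec, single_mulVec, *]

theorem single_of_span_eq {i m : ι} (him : i ≠ m) {b c : R}
    (h : span R {b} = span R {c}) : ElementaryReachable (Pi.single m b) (Pi.single m c) := by
  obtain ⟨u, hu⟩ := mem_span_singleton.mp (h ▸ mem_span_singleton_self c)
  obtain ⟨s, hs⟩ := mem_span_singleton.mp (h.symm ▸ mem_span_singleton_self b)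
  rw [smul_eq_mul] at hu hs
  have left (p q c : R) : ElementaryReachable (Pi.single i p + Pi.single m q : ι → R)
      (Pi.single i (p + c * q) + Pi.single m q) := by
    convert update_add_mul (Pi.single i p + Pi.single m q) him c using 1
    ext k
    rcases eq_or_ne k i with rfl | hk <;> simp [Pi.single_apply, *]
  have right (p q c : R) : ElementaryReachable (Pi.single i p + Pi.single m q : ι → R)
      (Pi.single i p + Pi.single m (q + c * p)) := by
    convert update_add_mul (Pi.single i p + Pi.single m q) him.symm c using 1
    ext k
    rcases eq_or_ne k m with rfl | hk <;> simp [Pi.single_apply, *]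
  -- `(0, b) ↦ (b, b) ↦ (b, u b) = (b, c) ↦ (b - s c, c) = (0, c)` on the coordinates `(i, m)`
  simpa [sub_mul, hu, hs] using ((left 0 b 1).trans (right _ _ (u - 1))).trans (left _ _ (-s))

theorem exists_update_zero_update [IsSemisimpleRing R] (x : ι → R) {i j : ι} (hij : i ≠ j) :
    ∃ g, span R {g} = span R {x i} ⊔ span R {x j} ∧
      ElementaryReachable x (update (update x i 0) j g) := by
  obtain ⟨t, ht⟩ := IsSemisimpleRing.exists_span_singleton_add_mul_eq_sup (x i) (x j)
  obtain ⟨r, hr⟩ := mem_span_singleton.mp (ht ▸ mem_sup_left (mem_span_singleton_self (x i)))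
  rw [smul_eq_mul] at hr
  refine ⟨x j + t * x i, ht, ?_⟩
  convert (update_add_mul x hij.symm t).trans (update_add_mul _ hij (-r)) using 1
  ext k
  rcases eq_or_ne k i with rfl | hki
  · simp [hij, hr]
  rcases eq_or_ne k j with rfl | hkj
  · simp [hki]
  · simp [hki, hkj]

theorem exists_update_piecewise [IsSemisimpleRing R] (x : ι → R) (m : ι) (s : Finset ι)
    (hm : m ∉ s) : ∃ g, span R {g} = span R (x '' ↑(insert m s)) ∧
      ElementaryReachable x (update (s.piecewise 0 x) m g) := by
  induction s using Finset.induction_on with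
  | empty => exact ⟨x m, by simp, by simpa using refl x⟩
  | insert j s hj ih =>
    obtain ⟨g, hg, hxg⟩ := ih (fun h => hm (Finset.mem_insert_of_mem h))
    have hjm : j ≠ m := fun h => hm (h ▸ Finset.mem_insert_self _ _)
    obtain ⟨g', hg', hr⟩ := exists_update_zero_update (update (s.piecewise 0 x) m g) hjm
    refine ⟨g', ?_, hxg.trans ?_⟩
    · rw [hg', update_of_ne hjm, Finset.piecewise_eq_of_notMem _ _ _ hj, update_self, hg]
      simp only [Finset.coe_insert, Set.image_insert_eq, span_insert]
      exact sup_left_comm _ _ _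
    · convert hr using 1
      ext k
      rcases eq_or_ne k m with rfl | hkm
      · simp
      rcases eq_or_ne k j with rfl | hkj <;> simp [*, Finset.piecewise_insert]

theorem exists_single [IsSemisimpleRing R] (x : ι → R) (m : ι) :
    ∃ g, span R {g} = span R (Set.range x) ∧ ElementaryReachable x (Pi.single m g) := by
  obtain ⟨g, hg, h⟩ := exists_update_piecewise x m _ (Finset.notMem_erase m Finset.univ)
  refine ⟨g, by simpa using hg, ?_⟩
  convert h using 1
  ext k
  rcases eq_or_ne k m with rfl | hkm <;> simp [*]

end ElementaryReachable

end Matrix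

/-- Let `R` be a semisimple artinian ring and `v = (a₁,…,aₙ)ᵗ` a column
vector over `R` with `n ≥ 2`. Write `Σᵢ Raᵢ = Re` with `e` an idempotent. Then there
is an elementary matrix `ε ∈ Eₙ(R)` (the subgroup generated by the transvections
`I + a·e_{ij}`, `i ≠ j`) with `ε·v = (0,…,0,e)ᵗ`. -/
theorem elementary_reduces_vector_to_idempotent {R : Type*} [Ring R]
    [IsSemisimpleRing R] (n : ℕ) (hn : 2 ≤ n) (v : Fin n → R) (e : R)
    (h : Submodule.span R (Set.range v) = Submodule.span R ({e} : Set R)) :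
    ∃ ε ∈ Submonoid.closure
        {M : Matrix (Fin n) (Fin n) R |
          ∃ (i j : Fin n) (a : R), i ≠ j ∧ M = 1 + Matrix.single i j a},
      ε.mulVec v = Pi.single ⟨n - 1, by omega⟩ e := by
  have hlast : (⟨0, by omega⟩ : Fin n) ≠ ⟨n - 1, by omega⟩ := by
    rw [ne_eq, Fin.mk.injEq]; omega
  obtain ⟨g, hg, hvg⟩ := Matrix.ElementaryReachable.exists_single v ⟨n - 1, by omega⟩
  exact hvg.trans (.single_of_span_eq hlast (hg.trans h))
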